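/- The first ghost-symmetry flow of the squared-eigenfunction potentials closes on local expressions: ∂(∂̄S₁) = ∂(s₁₁·S₁ + S₂) and ∂(∂̄s₁₁) = ∂(s₁₁² + s₂₁ − s₁₂); i.e., up to x-independent functions, ∂̄(∂⁻¹(Ψ₁F)) = ∂⁻¹(Φ₁Ψ₁)·∂⁻¹(Ψ₁F) + ∂⁻¹(Ψ₂F) and ∂̄(∂⁻¹(Φ₁Ψ₁)) = (∂⁻¹(Φ₁Ψ₁))² + ∂⁻¹(Ψ₂Φ₁) − ∂⁻¹(Ψ₁Φ₂). These relations justify the consistent use of the unique inverse derivative ∂⁻¹ (squared eigenfunction potential) in the paper's ghost-symmetry flows (M-s-eigenf), (M-s-generic). -/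

import Mathlib

/-- Partial derivative with respect to the first variable `x`. -/
noncomputable def pdx (f : ℝ → ℝ → ℝ) : ℝ → ℝ → ℝ :=
  fun x t => deriv (fun y => f y t) x

/-- Partial derivative with respect to the second variable `t̄`. -/
noncomputable def pdt (f : ℝ → ℝ → ℝ) : ℝ → ℝ → ℝ :=
  fun x t => deriv (fun s => f x s) t

/-- Smoothness of a function of two real variables. -/
def Smooth2 (f : ℝ → ℝ → ℝ) : Prop :=
  ContDiff ℝ (⊤ : ℕ∞) (Function.uncurry f)

lemma Smooth2.diff_x {f : ℝ → ℝ → ℝ} (hf : Smooth2 f) (t x : ℝ) :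
    DifferentiableAt ℝ (fun y => f y t) x := by
  have : (fun y => f y t) = (Function.uncurry f) ∘ (fun y => (y, t)) := rfl
  rw [this]
  exact (hf.differentiable (by simp) (x, t)).comp x
    (differentiableAt_id.prodMk (differentiableAt_const t))

lemma Smooth2.diff_t {f : ℝ → ℝ → ℝ} (hf : Smooth2 f) (x t : ℝ) :
    DifferentiableAt ℝ (fun s => f x s) t := by
  have : (fun s => f x s) = (Function.uncurry f) ∘ (fun s => (x, s)) := rfl
  rw [this]
  exact (hf.differentiable (by simp) (x, t)).comp t
    ((differentiableAt_const x).prodMk differentiableAt_id)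

lemma pdt_eq_fderiv {f : ℝ → ℝ → ℝ} (hf : Smooth2 f) (x t : ℝ) :
    pdt f x t = fderiv ℝ (Function.uncurry f) (x, t) (0, 1) := by
  have h1 : HasDerivAt (fun s => ((x, s) : ℝ × ℝ)) (0, 1) t :=
    (hasDerivAt_const t x).prodMk (hasDerivAt_id t)
  have h2 := (hf.differentiable (by simp) (x, t)).hasFDerivAt.comp_hasDerivAt t h1
  exact h2.deriv

lemma pdx_eq_fderiv {f : ℝ → ℝ → ℝ} (hf : Smooth2 f) (x t : ℝ) :
    pdx f x t = fderiv ℝ (Function.uncurry f) (x, t) (1, 0) := by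
  have h1 : HasDerivAt (fun y => ((y, t) : ℝ × ℝ)) (1, 0) x :=
    (hasDerivAt_id x).prodMk (hasDerivAt_const x t)
  have h2 := (hf.differentiable (by simp) (x, t)).hasFDerivAt.comp_hasDerivAt x h1
  exact h2.deriv

lemma smooth_symm {f : ℝ → ℝ → ℝ} (hf : Smooth2 f) (x t : ℝ) :
    pdx (pdt f) x t = pdt (pdx f) x t := by
  set g := Function.uncurry f with hg
  have hgd : Differentiable ℝ g := hf.differentiable (by simp)
  have hgd2 : Differentiable ℝ (fderiv ℝ g) :=
    (hf.fderiv_right (m := (⊤ : ℕ∞)) (by simp)).differentiable (by simp)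
  have hsymm : ∀ v w : ℝ × ℝ,
      fderiv ℝ (fderiv ℝ g) (x, t) v w = fderiv ℝ (fderiv ℝ g) (x, t) w v :=
    second_derivative_symmetric (fun y => (hgd y).hasFDerivAt)
      ((hgd2 (x, t)).hasFDerivAt)
  -- left side
  have hL : pdx (pdt f) x t = fderiv ℝ (fderiv ℝ g) (x, t) (1, 0) (0, 1) := by
    have h1 : HasDerivAt (fun y => ((y, t) : ℝ × ℝ)) (1, 0) x :=
      (hasDerivAt_id x).prodMk (hasDerivAt_const x t)
    have hc : HasDerivAt (fun y => fderiv ℝ g (y, t))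
        (fderiv ℝ (fderiv ℝ g) (x, t) (1, 0)) x :=
      (hgd2 (x, t)).hasFDerivAt.comp_hasDerivAt x h1
    have he := hc.clm_apply (hasDerivAt_const x ((0 : ℝ), (1 : ℝ)))
    simp only [map_zero, add_zero] at he
    have : pdx (pdt f) x t = deriv (fun y => fderiv ℝ g (y, t) (0, 1)) x := by
      unfold pdx
      congr 1
      funext y
      exact pdt_eq_fderiv hf y t
    rw [this, he.deriv]
  have hR : pdt (pdx f) x t = fderiv ℝ (fderiv ℝ g) (x, t) (0, 1) (1, 0) := by
    have h1 : HasDerivAt (fun s => ((x, s) : ℝ × ℝ)) (0, 1) t :=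
      (hasDerivAt_const t x).prodMk (hasDerivAt_id t)
    have hc : HasDerivAt (fun s => fderiv ℝ g (x, s))
        (fderiv ℝ (fderiv ℝ g) (x, t) (0, 1)) t :=
      (hgd2 (x, t)).hasFDerivAt.comp_hasDerivAt t h1
    have he := hc.clm_apply (hasDerivAt_const t ((1 : ℝ), (0 : ℝ)))
    simp only [map_zero, add_zero] at he
    have : pdt (pdx f) x t = deriv (fun s => fderiv ℝ g (x, s) (1, 0)) t := by
      unfold pdt
      congr 1
      funext s
      exact pdx_eq_fderiv hf x s
    rw [this, he.deriv]
  rw [hL, hR, hsymm]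

/-- the first ghost-symmetry flow of the squared-eigenfunction
potentials closes on local expressions: `∂(∂̄S₁) = ∂(s₁₁·S₁ + S₂)` and
`∂(∂̄s₁₁) = ∂(s₁₁² + s₂₁ − s₁₂)`, i.e. up to `x`-independent functions
`∂̄(∂⁻¹(Ψ₁F)) = ∂⁻¹(Φ₁Ψ₁)·∂⁻¹(Ψ₁F) + ∂⁻¹(Ψ₂F)` and
`∂̄(∂⁻¹(Φ₁Ψ₁)) = (∂⁻¹(Φ₁Ψ₁))² + ∂⁻¹(Ψ₂Φ₁) − ∂⁻¹(Ψ₁Φ₂)`. -/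
theorem ghost_flow_of_potentials_is_local
    (Φ₁ Φ₂ Ψ₁ Ψ₂ F s₁₁ s₁₂ s₂₁ S₁ S₂ : ℝ → ℝ → ℝ)
    (hΦ₁ : Smooth2 Φ₁) (hΦ₂ : Smooth2 Φ₂) (hΨ₁ : Smooth2 Ψ₁) (hΨ₂ : Smooth2 Ψ₂)
    (hF : Smooth2 F) (hs₁₁ : Smooth2 s₁₁) (hs₁₂ : Smooth2 s₁₂) (hs₂₁ : Smooth2 s₂₁)
    (hS₁ : Smooth2 S₁) (hS₂ : Smooth2 S₂)
    -- squared-eigenfunction potentials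
    (hpot₁₁ : ∀ x t, pdx s₁₁ x t = Φ₁ x t * Ψ₁ x t)
    (hpot₁₂ : ∀ x t, pdx s₁₂ x t = Ψ₁ x t * Φ₂ x t)
    (hpot₂₁ : ∀ x t, pdx s₂₁ x t = Ψ₂ x t * Φ₁ x t)
    (hpotS₁ : ∀ x t, pdx S₁ x t = Ψ₁ x t * F x t)
    (hpotS₂ : ∀ x t, pdx S₂ x t = Ψ₂ x t * F x t)
    -- first ghost-symmetry flow equations
    (hflowΦ₁ : ∀ x t, pdt Φ₁ x t = Φ₁ x t * s₁₁ x t - Φ₂ x t)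
    (hflowΨ₁ : ∀ x t, pdt Ψ₁ x t = Ψ₁ x t * s₁₁ x t + Ψ₂ x t)
    (hflowF : ∀ x t, pdt F x t = Φ₁ x t * S₁ x t) :
    (∀ x t, pdx (pdt S₁) x t =
      pdx (fun y u => s₁₁ y u * S₁ y u + S₂ y u) x t) ∧
    (∀ x t, pdx (pdt s₁₁) x t =
      pdx (fun y u => (s₁₁ y u) ^ 2 + s₂₁ y u - s₁₂ y u) x t) := by
  constructor
  · intro x t
    have hL : pdx (pdt S₁) x t =
        pdt Ψ₁ x t * F x t + Ψ₁ x t * pdt F x t := by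
      rw [smooth_symm hS₁ x t]
      show deriv (fun s => pdx S₁ x s) t = _
      have : (fun s => pdx S₁ x s) = fun s => Ψ₁ x s * F x s := by
        funext s; exact hpotS₁ x s
      rw [this, deriv_fun_mul (hΨ₁.diff_t x t) (hF.diff_t x t)]
      rfl
    have hR : pdx (fun y u => s₁₁ y u * S₁ y u + S₂ y u) x t =
        (pdx s₁₁ x t * S₁ x t + s₁₁ x t * pdx S₁ x t) + pdx S₂ x t := by
      show deriv (fun y => s₁₁ y t * S₁ y t + S₂ y t) x = _
      rw [deriv_fun_add ((hs₁₁.diff_x t x).fun_mul (hS₁.diff_x t x)) (hS₂.diff_x t x),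
        deriv_fun_mul (hs₁₁.diff_x t x) (hS₁.diff_x t x)]
      rfl
    rw [hL, hR, hpot₁₁, hpotS₁, hpotS₂, hflowΨ₁, hflowF]
    ring
  · intro x t
    have hL : pdx (pdt s₁₁) x t =
        pdt Φ₁ x t * Ψ₁ x t + Φ₁ x t * pdt Ψ₁ x t := by
      rw [smooth_symm hs₁₁ x t]
      show deriv (fun s => pdx s₁₁ x s) t = _
      have : (fun s => pdx s₁₁ x s) = fun s => Φ₁ x s * Ψ₁ x s := by
        funext s; exact hpot₁₁ x s
      rw [this, deriv_fun_mul (hΦ₁.diff_t x t) (hΨ₁.diff_t x t)]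
      rfl
    have hR : pdx (fun y u => (s₁₁ y u) ^ 2 + s₂₁ y u - s₁₂ y u) x t =
        (2 * s₁₁ x t * pdx s₁₁ x t + pdx s₂₁ x t) - pdx s₁₂ x t := by
      show deriv (fun y => (s₁₁ y t) ^ 2 + s₂₁ y t - s₁₂ y t) x = _
      rw [deriv_fun_sub (((hs₁₁.diff_x t x).fun_pow 2).fun_add (hs₂₁.diff_x t x)) (hs₁₂.diff_x t x),
        deriv_fun_add ((hs₁₁.diff_x t x).fun_pow 2) (hs₂₁.diff_x t x),
        deriv_fun_pow (hs₁₁.diff_x t x) 2]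
      show ((2 : ℕ) : ℝ) * s₁₁ x t ^ (2 - 1) * pdx s₁₁ x t + _ - _ = _
      norm_num [pdx]
    rw [hL, hR, hpot₁₁, hpot₂₁, hpot₁₂, hflowΦ₁, hflowΨ₁]
    ring
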